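/- Let p ≥ 3 be a prime, let q, k ≥ 1 be natural numbers and θ ∈ ℚ_p with |θ − 1|_p < |q|_p < |k|_p. If ξ, ξ′ ∈ ℚ_p are two distinct k-th roots of unity (ξ^k = ξ′^k = 1, ξ ≠ ξ′), then |x_ξ − x_{ξ′}|_p ≥ |q·(θ − 1)|_p; in particular the open balls B_r(x_ξ) and B_r(x_{ξ′}) with r = |q·(θ − 1)|_p are disjoint. -/

import Mathlib

/-!
Two distinct `k`-th roots of unity `ξ, ξ'` in `ℚ_p`, `p` odd, are at distance `1`: otherwise
`ζ = ξ / ξ' ≠ 1` is a root of unity with `‖ζ - 1‖ < 1`. If `p` does not divide its order `n`,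
`1 + ζ + ⋯ + ζ ^ (n - 1) ≡ n` is a unit, contradicting `ζ ^ n = 1`; if `p ∣ n`, a power of `ζ` is a
primitive `p`-th root `η` with `‖η - 1‖ < 1`, and then `‖p‖ = ‖Φ_p(1)‖ = ∏ ‖1 - ηⁱ‖ ≤ p^(1-p)`,
absurd for `p ≥ 3`.

For `ξ, ξ' ≠ 1` the centres differ by `q (θ - 1) (ξ - ξ') / ((1 - ξ) (1 - ξ'))`, of norm exactly
`‖q (θ - 1)‖`. For `ξ = 1` they differ by `(θ - 1) (k + w)` where each term of `w` has norm `< ‖k‖`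
(the one with `6k` in the denominator because `‖q‖ ≤ ‖k‖ / p` and `‖6‖ ≥ 1 / p`), so the norm is
`‖k‖ ‖θ - 1‖ ≥ ‖q (θ - 1)‖`. Disjointness of the balls is then the ultrametric inequality.
-/

open scoped Classical

/-- The center `x_ξ` associated with a `k`-th root of unity `ξ`. -/
noncomputable def xiCenter (p : ℕ) [Fact p.Prime] (q k : ℕ) (θ ξ : ℚ_[p]) : ℚ_[p] :=
  if ξ = 1 then
    1 - (q : ℚ_[p]) + ((k : ℚ_[p]) - 1) *
      (1 - (q : ℚ_[p]) / 2 + ((k : ℚ_[p]) - 2) * (q : ℚ_[p]) ^ 2 / (6 * (k : ℚ_[p]))) * (θ - 1)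
  else
    2 - (q : ℚ_[p]) - θ + (q : ℚ_[p]) * (θ - 1) / (1 - ξ)

open Polynomial Metric

theorem IsUltrametricDist.disjoint_ball_of_le_dist {X : Type*} [PseudoMetricSpace X]
    [IsUltrametricDist X] {x y : X} {r : ℝ} (h : r ≤ dist x y) :
    Disjoint (ball x r) (ball y r) :=
  Set.disjoint_left.mpr fun z hzx hzy =>
    h.not_gt ((dist_triangle_max x z y).trans_lt (max_lt (by rwa [dist_comm]) hzy))

theorem IsUltrametricDist.norm_sub_lt {E : Type*} [SeminormedAddCommGroup E]
    [IsUltrametricDist E] {x y : E} {r : ℝ} (hx : ‖x‖ < r) (hy : ‖y‖ < r) : ‖x - y‖ < r := by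
  rw [sub_eq_add_neg]
  exact (norm_add_le_max x (-y)).trans_lt (max_lt hx (by rwa [norm_neg]))

section Ultrametric

variable {K : Type*} [NormedDivisionRing K] [IsUltrametricDist K]

theorem norm_le_one_of_norm_sub_one_lt_one {ζ : K} (h : ‖ζ - 1‖ < 1) : ‖ζ‖ ≤ 1 := by
  simpa using IsUltrametricDist.norm_add_le_max (ζ - 1) 1 |>.trans (max_le h.le norm_one.le)

theorem norm_pow_sub_one_le_norm_sub_one {ζ : K} (hζ : ‖ζ‖ ≤ 1) (n : ℕ) :
    ‖ζ ^ n - 1‖ ≤ ‖ζ - 1‖ := by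
  rw [← geom_sum_mul, norm_mul]
  refine mul_le_of_le_one_left (norm_nonneg _) ?_
  exact IsUltrametricDist.norm_sum_le_of_forall_le_of_nonneg zero_le_one
    fun i _ => by simpa using pow_le_one₀ (norm_nonneg ζ) hζ

theorem norm_geom_sum_sub_natCast_le {ζ : K} (hζ : ‖ζ‖ ≤ 1) (n : ℕ) :
    ‖∑ i ∈ Finset.range n, ζ ^ i - n‖ ≤ ‖ζ - 1‖ := by
  have hsum : ∑ i ∈ Finset.range n, ζ ^ i - n = ∑ i ∈ Finset.range n, (ζ ^ i - 1) := by
    simp [Finset.sum_sub_distrib]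
  rw [hsum]
  exact IsUltrametricDist.norm_sum_le_of_forall_le_of_nonneg (norm_nonneg _)
    fun i _ => norm_pow_sub_one_le_norm_sub_one hζ i

theorem eq_one_of_pow_eq_one_of_norm_natCast_eq_one {ζ : K} {n : ℕ} (hn : ‖(n : K)‖ = 1)
    (hζ : ζ ^ n = 1) (h : ‖ζ - 1‖ < 1) : ζ = 1 := by
  have hsum : ‖∑ i ∈ Finset.range n, ζ ^ i‖ = 1 := by
    have hlt : ‖∑ i ∈ Finset.range n, ζ ^ i - n‖ < ‖(n : K)‖ :=
      hn ▸ (norm_geom_sum_sub_natCast_le (norm_le_one_of_norm_sub_one_lt_one h) n).trans_lt h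
    rw [← sub_add_cancel (∑ i ∈ Finset.range n, ζ ^ i) (n : K),
      IsUltrametricDist.norm_add_eq_max_of_norm_ne_norm hlt.ne, max_eq_right hlt.le, hn]
  have hprod : (∑ i ∈ Finset.range n, ζ ^ i) * (ζ - 1) = 0 := by rw [geom_sum_mul, hζ, sub_self]
  exact sub_eq_zero.mp ((mul_eq_zero.mp hprod).resolve_left (norm_ne_zero_iff.mp (by simp [hsum])))

end Ultrametric

namespace Padic

variable {p : ℕ} [hp : Fact p.Prime]

theorem norm_le_inv_mul_of_norm_lt {x y : ℚ_[p]} (h : ‖x‖ < ‖y‖) : ‖x‖ ≤ (p : ℝ)⁻¹ * ‖y‖ := by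
  have hy : 0 < ‖y‖ := (norm_nonneg x).trans_lt h
  have hxy : ‖x / y‖ < (p : ℝ) ^ (0 : ℤ) := by
    rwa [norm_div, zpow_zero, div_lt_one hy]
  have := (norm_lt_pow_iff_norm_le_pow_sub_one _ _).mp hxy
  rwa [norm_div, div_le_iff₀ hy, zero_sub, zpow_neg_one] at this

theorem norm_natCast_eq_one_of_prime_ne {ℓ : ℕ} (hℓ : ℓ.Prime) (h : p ≠ ℓ) :
    ‖(ℓ : ℚ_[p])‖ = 1 :=
  norm_natCast_eq_one_iff.mpr ((Nat.coprime_primes hp.out hℓ).mpr h)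

theorem inv_le_norm_six (hp2 : p ≠ 2) : (p : ℝ)⁻¹ ≤ ‖(6 : ℚ_[p])‖ := by
  have h6 : (6 : ℚ_[p]) = (2 : ℕ) * (3 : ℕ) := by norm_num
  rw [h6, norm_mul, norm_natCast_eq_one_of_prime_ne Nat.prime_two hp2, one_mul]
  rcases eq_or_ne p 3 with rfl | hp3
  · exact norm_p.ge
  · rw [norm_natCast_eq_one_of_prime_ne Nat.prime_three hp3]
    exact inv_le_one_of_one_le₀ (mod_cast hp.out.one_le)

theorem eq_one_of_pow_prime_eq_one (hp2 : p ≠ 2) {η : ℚ_[p]} (hη : η ^ p = 1)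
    (h : ‖η - 1‖ < 1) : η = 1 := by
  by_contra hne
  have hprim : IsPrimitiveRoot η p := by
    simpa only [orderOf_eq_prime hη hne] using IsPrimitiveRoot.orderOf η
  have hfactor : ∀ μ ∈ primitiveRoots p ℚ_[p], ‖1 - μ‖ ≤ (p : ℝ)⁻¹ := by
    intro μ hμ
    obtain ⟨i, -, rfl⟩ :=
      hprim.eq_pow_of_pow_eq_one ((mem_primitiveRoots hp.out.pos).mp hμ).pow_eq_one
    have hlt : ‖1 - η ^ i‖ < ‖(1 : ℚ_[p])‖ := by
      rw [norm_sub_rev, norm_one]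
      exact (norm_pow_sub_one_le_norm_sub_one (norm_le_one_of_norm_sub_one_lt_one h) i).trans_lt h
    simpa using norm_le_inv_mul_of_norm_lt hlt
  have hprod : (p : ℚ_[p]) = ∏ μ ∈ primitiveRoots p ℚ_[p], (1 - μ) := by
    rw [← eval_one_cyclotomic_prime, cyclotomic_eq_prod_X_sub_primitiveRoots hprim, eval_prod]
    simp
  have hinv : (0 : ℝ) < (p : ℝ)⁻¹ := inv_pos.mpr (mod_cast hp.out.pos)
  have hinv1 : (p : ℝ)⁻¹ < 1 := inv_lt_one_of_one_lt₀ (mod_cast hp.out.one_lt)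
  have h2p : 2 ≤ p - 1 := by have := hp.out.two_le; omega
  refine (pow_lt_self_of_lt_one₀ hinv hinv1 one_lt_two).not_ge ?_
  calc (p : ℝ)⁻¹ = ∏ μ ∈ primitiveRoots p ℚ_[p], ‖1 - μ‖ := by rw [← norm_prod, ← hprod, norm_p]
    _ ≤ ∏ μ ∈ primitiveRoots p ℚ_[p], (p : ℝ)⁻¹ :=
      Finset.prod_le_prod (fun _ _ => norm_nonneg _) hfactor
    _ = (p : ℝ)⁻¹ ^ (p - 1) := by
      rw [Finset.prod_const, hprim.card_primitiveRoots, Nat.totient_prime hp.out]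
    _ ≤ (p : ℝ)⁻¹ ^ 2 := pow_le_pow_of_le_one hinv.le hinv1.le h2p

theorem eq_one_of_pow_eq_one_of_norm_sub_one_lt_one (hp2 : p ≠ 2) {ζ : ℚ_[p]} {k : ℕ}
    (hk : k ≠ 0) (hζ : ζ ^ k = 1) (h : ‖ζ - 1‖ < 1) : ζ = 1 := by
  have hfin : orderOf ζ ≠ 0 :=
    (orderOf_pos_iff.mpr (isOfFinOrder_iff_pow_eq_one.mpr ⟨k, Nat.pos_of_ne_zero hk, hζ⟩)).ne'
  by_cases hdvd : p ∣ orderOf ζ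
  · have hord := orderOf_pow_orderOf_div hfin hdvd
    have hη := eq_one_of_pow_prime_eq_one hp2 (hord ▸ pow_orderOf_eq_one _)
      ((norm_pow_sub_one_le_norm_sub_one (norm_le_one_of_norm_sub_one_lt_one h) _).trans_lt h)
    rw [hη, orderOf_one] at hord
    exact (hp.out.one_lt.ne hord).elim
  · refine eq_one_of_pow_eq_one_of_norm_natCast_eq_one ?_ (pow_orderOf_eq_one ζ) h
    exact norm_natCast_eq_one_iff.mpr ((Nat.Prime.coprime_iff_not_dvd hp.out).mpr hdvd)

theorem norm_sub_eq_one_of_pow_eq_one (hp2 : p ≠ 2) {ξ ξ' : ℚ_[p]} {k : ℕ} (hk : k ≠ 0)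
    (hξ : ξ ^ k = 1) (hξ' : ξ' ^ k = 1) (hne : ξ ≠ ξ') : ‖ξ - ξ'‖ = 1 := by
  have hnorm : ∀ {ζ : ℚ_[p]}, ζ ^ k = 1 → ‖ζ‖ = 1 := fun hζ =>
    (isOfFinOrder_iff_pow_eq_one.mpr ⟨k, Nat.pos_of_ne_zero hk, hζ⟩).norm_eq_one
  have hξ'0 : ξ' ≠ 0 := norm_ne_zero_iff.mp (by simp [hnorm hξ'])
  have hdiv : ξ - ξ' = (ξ / ξ' - 1) * ξ' := by field_simp
  refine le_antisymm ?_ ?_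
  · simpa [hnorm hξ, hnorm hξ', ← sub_eq_add_neg] using IsUltrametricDist.norm_add_le_max ξ (-ξ')
  · rw [hdiv, norm_mul, hnorm hξ', mul_one]
    by_contra hlt
    refine hne ((div_eq_one_iff_eq hξ'0).mp ?_)
    exact eq_one_of_pow_eq_one_of_norm_sub_one_lt_one hp2 hk (by rw [div_pow, hξ, hξ', div_one])
      (not_le.mp hlt)

end Padic

section Centers

open Padic

variable {p : ℕ} [hp : Fact p.Prime] {q k : ℕ} {θ : ℚ_[p]}

theorem xiCenter_sub_xiCenter_of_ne_one {ξ ξ' : ℚ_[p]} (hξ : ξ ≠ 1) (hξ' : ξ' ≠ 1) :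
    xiCenter p q k θ ξ - xiCenter p q k θ ξ' =
      q * (θ - 1) * ((ξ - ξ') / ((1 - ξ) * (1 - ξ'))) := by
  have h1 : (1 : ℚ_[p]) - ξ ≠ 0 := sub_ne_zero.mpr (Ne.symm hξ)
  have h1' : (1 : ℚ_[p]) - ξ' ≠ 0 := sub_ne_zero.mpr (Ne.symm hξ')
  simp only [xiCenter, if_neg hξ, if_neg hξ']
  field_simp
  ring

theorem xiCenter_one_sub_xiCenter {ξ' : ℚ_[p]} (hξ' : ξ' ≠ 1) :
    xiCenter p q k θ 1 - xiCenter p q k θ ξ' = (θ - 1) * (k + ((k - 1) * (k - 2) * q ^ 2 / (6 * k)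
      - (k - 1) * q / 2 - q / (1 - ξ'))) := by
  rw [xiCenter, xiCenter, if_pos rfl, if_neg hξ']
  ring

theorem norm_xiCenter_sub_xiCenter_of_ne_one (hp2 : p ≠ 2) (hk : k ≠ 0) {ξ ξ' : ℚ_[p]}
    (hξ : ξ ^ k = 1) (hξ' : ξ' ^ k = 1) (hξ1 : ξ ≠ 1) (hξ'1 : ξ' ≠ 1) (hne : ξ ≠ ξ') :
    ‖xiCenter p q k θ ξ - xiCenter p q k θ ξ'‖ = ‖(q : ℚ_[p]) * (θ - 1)‖ := by
  have hroot := fun {ζ ζ' : ℚ_[p]} => norm_sub_eq_one_of_pow_eq_one hp2 hk (ξ := ζ) (ξ' := ζ')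
  rw [xiCenter_sub_xiCenter_of_ne_one hξ1 hξ'1, norm_mul _ (_ / _), norm_div, norm_mul (1 - ξ),
    hroot hξ hξ' hne, hroot (one_pow k) hξ (Ne.symm hξ1), hroot (one_pow k) hξ' (Ne.symm hξ'1)]
  simp

theorem norm_xiCenter_one_sub_xiCenter (hp2 : p ≠ 2) (hqk : ‖(q : ℚ_[p])‖ < ‖(k : ℚ_[p])‖)
    {ξ' : ℚ_[p]} (hξ' : ξ' ^ k = 1) (hξ'1 : ξ' ≠ 1) :
    ‖xiCenter p q k θ 1 - xiCenter p q k θ ξ'‖ = ‖(k : ℚ_[p])‖ * ‖θ - 1‖ := by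
  have hK : 0 < ‖(k : ℚ_[p])‖ := (norm_nonneg _).trans_lt hqk
  have hk : k ≠ 0 := Nat.cast_ne_zero.mp (norm_pos_iff.mp hK)
  set K : ℚ_[p] := (k : ℚ_[p])
  set Q : ℚ_[p] := (q : ℚ_[p])
  have hK1 : ‖K - 1‖ ≤ 1 := by simpa [K] using norm_int_le_one (p := p) (k - 1)
  have hK2 : ‖K - 2‖ ≤ 1 := by simpa [K] using norm_int_le_one (p := p) (k - 2)
  have h2 : ‖(2 : ℚ_[p])‖ = 1 := by simpa using norm_natCast_eq_one_of_prime_ne Nat.prime_two hp2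
  have hQK : ‖Q‖ ≤ (p : ℝ)⁻¹ * ‖K‖ := norm_le_inv_mul_of_norm_lt hqk
  have hp0 : (0 : ℝ) < p := mod_cast hp.out.pos
  have hcubic : ‖(K - 1) * (K - 2) * Q ^ 2 / (6 * K)‖ < ‖K‖ :=
    calc ‖(K - 1) * (K - 2) * Q ^ 2 / (6 * K)‖
        = ‖K - 1‖ * ‖K - 2‖ * (‖Q‖ * ‖Q‖) / (‖(6 : ℚ_[p])‖ * ‖K‖) := by
          rw [norm_div, norm_mul, norm_mul, norm_mul, norm_pow, sq]
      _ ≤ 1 * 1 * (‖Q‖ * ((p : ℝ)⁻¹ * ‖K‖)) / ((p : ℝ)⁻¹ * ‖K‖) := by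
          gcongr
          exact inv_le_norm_six hp2
      _ = ‖Q‖ := by field_simp
      _ < ‖K‖ := hqk
  have hlinear : ‖(K - 1) * Q / 2‖ < ‖K‖ := by
    rw [norm_div, norm_mul, h2, div_one]
    exact (mul_le_of_le_one_left (norm_nonneg Q) hK1).trans_lt hqk
  have hroot : ‖Q / (1 - ξ')‖ < ‖K‖ := by
    rwa [norm_div, norm_sub_eq_one_of_pow_eq_one hp2 hk (one_pow k) hξ' (Ne.symm hξ'1), div_one]
  have hw := IsUltrametricDist.norm_sub_lt (IsUltrametricDist.norm_sub_lt hcubic hlinear) hroot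
  rw [xiCenter_one_sub_xiCenter hξ'1, norm_mul, mul_comm,
    IsUltrametricDist.norm_add_eq_max_of_norm_ne_norm hw.ne', max_eq_left hw.le]

theorem norm_mul_sub_one_le_norm_xiCenter_sub_xiCenter (hp2 : p ≠ 2)
    (hqk : ‖(q : ℚ_[p])‖ < ‖(k : ℚ_[p])‖) {ξ ξ' : ℚ_[p]} (hξ : ξ ^ k = 1) (hξ' : ξ' ^ k = 1)
    (hne : ξ ≠ ξ') :
    ‖(q : ℚ_[p]) * (θ - 1)‖ ≤ ‖xiCenter p q k θ ξ - xiCenter p q k θ ξ'‖ := by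
  have hk : k ≠ 0 := Nat.cast_ne_zero.mp (norm_pos_iff.mp ((norm_nonneg _).trans_lt hqk))
  have hone : ∀ {ζ : ℚ_[p]}, ζ ^ k = 1 → ζ ≠ 1 →
      ‖(q : ℚ_[p]) * (θ - 1)‖ ≤ ‖xiCenter p q k θ 1 - xiCenter p q k θ ζ‖ := fun hζ hζ1 => by
    rw [norm_xiCenter_one_sub_xiCenter hp2 hqk hζ hζ1, norm_mul]
    exact mul_le_mul_of_nonneg_right hqk.le (norm_nonneg _)
  rcases eq_or_ne ξ 1 with rfl | hξ1
  · exact hone hξ' hne.symm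
  rcases eq_or_ne ξ' 1 with rfl | hξ'1
  · exact norm_sub_rev (xiCenter p q k θ ξ) _ ▸ hone hξ hξ1
  exact (norm_xiCenter_sub_xiCenter_of_ne_one hp2 hk hξ hξ' hξ1 hξ'1 hne).ge

end Centers

theorem stmt7_general (p : ℕ) [Fact p.Prime] (hp : 3 ≤ p) (q k : ℕ)
    (θ : ℚ_[p]) (hqk : ‖(q : ℚ_[p])‖ < ‖(k : ℚ_[p])‖)
    (ξ ξ' : ℚ_[p]) (hξ : ξ ^ k = 1) (hξ' : ξ' ^ k = 1) (hne : ξ ≠ ξ') :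
    ‖xiCenter p q k θ ξ - xiCenter p q k θ ξ'‖ ≥ ‖(q : ℚ_[p]) * (θ - 1)‖ ∧
    Disjoint {x : ℚ_[p] | ‖x - xiCenter p q k θ ξ‖ < ‖(q : ℚ_[p]) * (θ - 1)‖}
      {x : ℚ_[p] | ‖x - xiCenter p q k θ ξ'‖ < ‖(q : ℚ_[p]) * (θ - 1)‖} := by
  have hsep := norm_mul_sub_one_le_norm_xiCenter_sub_xiCenter (θ := θ) (by omega) hqk hξ hξ' hne
  refine ⟨hsep, ?_⟩
  simp only [← dist_eq_norm]
  exact IsUltrametricDist.disjoint_ball_of_le_dist hsep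

theorem stmt7 (p : ℕ) [Fact p.Prime] (hp : 3 ≤ p) (q k : ℕ) (hq : 1 ≤ q) (hk : 1 ≤ k)
    (θ : ℚ_[p]) (hθq : ‖θ - 1‖ < ‖(q : ℚ_[p])‖) (hqk : ‖(q : ℚ_[p])‖ < ‖(k : ℚ_[p])‖)
    (ξ ξ' : ℚ_[p]) (hξ : ξ ^ k = 1) (hξ' : ξ' ^ k = 1) (hne : ξ ≠ ξ') :
    ‖xiCenter p q k θ ξ - xiCenter p q k θ ξ'‖ ≥ ‖(q : ℚ_[p]) * (θ - 1)‖ ∧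
    Disjoint {x : ℚ_[p] | ‖x - xiCenter p q k θ ξ‖ < ‖(q : ℚ_[p]) * (θ - 1)‖}
      {x : ℚ_[p] | ‖x - xiCenter p q k θ ξ'‖ < ‖(q : ℚ_[p]) * (θ - 1)‖} :=
  stmt7_general p hp q k θ hqk ξ ξ' hξ hξ' hne
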